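/- For every x > 0, Γ(x + 1/2)/Γ(x) ≤ √x, where Γ is the gamma function. -/
import Mathlib

open Real

/-- `Γ(x + 1/2)/Γ(x) ≤ √x` for every `x > 0`. -/
theorem Gamma_add_half_div_Gamma_le_sqrt (x : ℝ) (hx : 0 < x) :
    Real.Gamma (x + 1 / 2) / Real.Gamma x ≤ Real.sqrt x := by
  have hx1 : (0:ℝ) < x + 1 := by linarith
  have hG : 0 < Real.Gamma x := Real.Gamma_pos_of_pos hx
  have hG1 : 0 < Real.Gamma (x + 1) := Real.Gamma_pos_of_pos hx1
  have h := Real.convexOn_log_Gamma.2 (Set.mem_Ioi.mpr hx) (Set.mem_Ioi.mpr hx1)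
    (by norm_num : (0:ℝ) ≤ 1/2) (by norm_num : (0:ℝ) ≤ 1/2) (by norm_num)
  simp only [Function.comp, smul_eq_mul] at h
  have heq : (1/2 : ℝ) * x + (1/2) * (x + 1) = x + 1/2 := by ring
  rw [heq] at h
  have h1 : Real.Gamma (x + 1) = x * Real.Gamma x := by
    rw [Real.Gamma_add_one hx.ne']
  have h2 : Real.log (Real.Gamma (x + 1/2)) ≤ Real.log (Real.Gamma x) + Real.log x / 2 := by
    rw [h1, Real.log_mul hx.ne' hG.ne'] at h
    linarith
  have hGhalf : 0 < Real.Gamma (x + 1/2) := Real.Gamma_pos_of_pos (by linarith)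
  have := Real.exp_le_exp.mpr h2
  rw [Real.exp_log hGhalf, Real.exp_add, Real.exp_log hG] at this
  have hsq : Real.exp (Real.log x / 2) = Real.sqrt x := by
    rw [Real.sqrt_eq_rpow, Real.rpow_def_of_pos hx]; ring_nf
  rw [hsq] at this
  rw [div_le_iff₀ hG]
  linarith [this]
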